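/- For any word x over {(, ), [, ]} and the 'mark and separate' homomorphism h defined by h('(') = '(a', h(')') = 'b)', h('[') = '[c', h(']') = 'd]', the word x is in the Dyck language D₂ if and only if h(x) is in the language DD₂ generated by the grammar S → (aSb) | [cSd] | SS | (ab) | [cd]. -/

import Mathlib

/-- The alphabet `{(, ), [, ], a, b, c, d}`. -/
inductive Sym8 : Type
  | lp | rp | lb | rb | a | b | c | d
deriving DecidableEq

/-- The ε-free Dyck language `D₂` over the bracket symbols. -/
inductive D2 : List Sym8 → Prop
  | paren {w : List Sym8} : D2 w → D2 ([Sym8.lp] ++ w ++ [Sym8.rp])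
  | brack {w : List Sym8} : D2 w → D2 ([Sym8.lb] ++ w ++ [Sym8.rb])
  | app {u v : List Sym8} : D2 u → D2 v → D2 (u ++ v)
  | base1 : D2 [Sym8.lp, Sym8.rp]
  | base2 : D2 [Sym8.lb, Sym8.rb]

/-- The language `DD₂` generated by `S → (aSb) | [cSd] | SS | (ab) | [cd]`. -/
inductive DD2 : List Sym8 → Prop
  | paren {w : List Sym8} : DD2 w → DD2 ([Sym8.lp, Sym8.a] ++ w ++ [Sym8.b, Sym8.rp])
  | brack {w : List Sym8} : DD2 w → DD2 ([Sym8.lb, Sym8.c] ++ w ++ [Sym8.d, Sym8.rb])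
  | app {u v : List Sym8} : DD2 u → DD2 v → DD2 (u ++ v)
  | base1 : DD2 [Sym8.lp, Sym8.a, Sym8.b, Sym8.rp]
  | base2 : DD2 [Sym8.lb, Sym8.c, Sym8.d, Sym8.rb]

/-- The "mark and separate" homomorphism `h`:
`( ↦ (a`, `) ↦ b)`, `[ ↦ [c`, `] ↦ d]` (identity on the other symbols). -/
def h : Sym8 → List Sym8
  | Sym8.lp => [Sym8.lp, Sym8.a]
  | Sym8.rp => [Sym8.b, Sym8.rp]
  | Sym8.lb => [Sym8.lb, Sym8.c]
  | Sym8.rb => [Sym8.d, Sym8.rb]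
  | s => [s]

/-!
Each production of `D₂` is carried by `h` to the corresponding production of `DD₂`, so an
induction on derivations shows both that `h(D₂) ⊆ DD₂` and that every word of `DD₂` is `h` of a
word of `D₂`. What remains is that `h` is injective on all words: its images `(a`, `b)`, `[c`,
`d]`, `a`, `b`, `c`, `d` form a code, decoded greedily by `unmark`, since no image begins with
`)` or `]`.
-/

def unmark : List Sym8 → List Sym8
  | [] => []
  | Sym8.lp :: Sym8.a :: w => Sym8.lp :: unmark w
  | Sym8.b :: Sym8.rp :: w => Sym8.rp :: unmark w
  | Sym8.lb :: Sym8.c :: w => Sym8.lb :: unmark w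
  | Sym8.d :: Sym8.rb :: w => Sym8.rb :: unmark w
  | s :: w => s :: unmark w

lemma head?_flatMap_h_ne_rp (x : List Sym8) : (x.flatMap h).head? ≠ some Sym8.rp := by
  rcases x with _ | ⟨s, x⟩
  · simp
  · cases s <;> simp [h]

lemma head?_flatMap_h_ne_rb (x : List Sym8) : (x.flatMap h).head? ≠ some Sym8.rb := by
  rcases x with _ | ⟨s, x⟩
  · simp
  · cases s <;> simp [h]

lemma unmark_h_append (s : Sym8) {w : List Sym8} (hrp : w.head? ≠ some Sym8.rp)
    (hrb : w.head? ≠ some Sym8.rb) : unmark (h s ++ w) = s :: unmark w := by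
  rcases w with _ | ⟨_ | _ | _ | _ | _ | _ | _ | _, w⟩ <;> cases s <;> simp_all [h, unmark]

lemma unmark_flatMap_h (x : List Sym8) : unmark (x.flatMap h) = x := by
  induction x with
  | nil => rfl
  | cons s x ih =>
    rw [List.flatMap_cons,
      unmark_h_append s (head?_flatMap_h_ne_rp x) (head?_flatMap_h_ne_rb x), ih]

lemma flatMap_h_injective : Function.Injective (fun x : List Sym8 => x.flatMap h) :=
  Function.LeftInverse.injective unmark_flatMap_h

lemma D2.dd2_flatMap_h {x : List Sym8} (hx : D2 x) : DD2 (x.flatMap h) := by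
  induction hx with
  | paren _ ih => simpa [h] using DD2.paren ih
  | brack _ ih => simpa [h] using DD2.brack ih
  | app _ _ ihu ihv => simpa using DD2.app ihu ihv
  | base1 => exact DD2.base1
  | base2 => exact DD2.base2

lemma DD2.exists_d2_flatMap_h_eq {w : List Sym8} (hw : DD2 w) :
    ∃ x, D2 x ∧ x.flatMap h = w := by
  induction hw with
  | paren _ ih =>
    obtain ⟨x, hx, rfl⟩ := ih
    exact ⟨_, hx.paren, by simp [h]⟩
  | brack _ ih =>
    obtain ⟨x, hx, rfl⟩ := ih
    exact ⟨_, hx.brack, by simp [h]⟩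
  | app _ _ ihu ihv =>
    obtain ⟨u, hu, rfl⟩ := ihu
    obtain ⟨v, hv, rfl⟩ := ihv
    exact ⟨_, hu.app hv, List.flatMap_append⟩
  | base1 => exact ⟨_, D2.base1, rfl⟩
  | base2 => exact ⟨_, D2.base2, rfl⟩

theorem stmt8_general (x : List Sym8) :
    D2 x ↔ DD2 (x.flatMap h) := by
  refine ⟨D2.dd2_flatMap_h, fun hx => ?_⟩
  obtain ⟨y, hy, hyx⟩ := hx.exists_d2_flatMap_h_eq
  rwa [← flatMap_h_injective hyx]

/-- For any word `x` over the bracket symbols: `x ∈ D₂` iff `h(x) ∈ DD₂`. -/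
theorem stmt8 (x : List Sym8)
    (hx : ∀ s ∈ x, s = Sym8.lp ∨ s = Sym8.rp ∨ s = Sym8.lb ∨ s = Sym8.rb) :
    D2 x ↔ DD2 (x.flatMap h) :=
  stmt8_general x
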